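/- Let f : ℝ² → ℝ² be a continuously differentiable (hence locally Lipschitz) vector field with flow φ_f, let g : ℝ² → ℝ be continuously differentiable, and let G = {x ∈ ℝ² | g(x) = 0}. Let A ⊆ ℝ² be an open set with A ∩ G = ∅. If for all x ∈ A the return time τ_{f,G}(x) is finite, so that z = P_{f,G}(x) is defined, and ∇g(z)·f(z) ≠ 0, then the Poincaré map P_{f,G} restricted to A is continuous. -/

import Mathlib

open scoped RealInnerProductSpace
open Filter Topology

noncomputable section

/-- The planar state space ℝ². -/
abbrev State := EuclideanSpace ℝ (Fin 2)

/-- `φ` is the flow of the vector field `f` : `φ x 0 = x` and `∂φ(x,t)/∂t = f (φ x t)`. -/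
def IsFlow (f : State → State) (φ : State → ℝ → State) : Prop :=
  (∀ x, φ x 0 = x) ∧ ∀ x t, HasDerivAt (fun u => φ x u) (f (φ x t)) t

/-- The set of positive times at which the flow starting at `x` lies in `U`. -/
def hitTimes (φ : State → ℝ → State) (U : Set State) (x : State) : Set ℝ :=
  {t : ℝ | 0 < t ∧ φ x t ∈ U}

/-- The return time `τ_{f,U}(x)` is finite. -/
def hits (φ : State → ℝ → State) (U : Set State) (x : State) : Prop :=
  (hitTimes φ U x).Nonempty

/-- The return time `τ_{f,U}(x)` (a real number, junk value if the set is empty). -/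
def retTime (φ : State → ℝ → State) (U : Set State) (x : State) : ℝ :=
  sInf (hitTimes φ U x)

/-- The return time `τ_{f,U}(x)` as an extended real (`⊤` if the flow never returns to `U`). -/
def retTimeE (φ : State → ℝ → State) (U : Set State) (x : State) : EReal :=
  sInf (Real.toEReal '' hitTimes φ U x)

/-- The Poincaré map `P_{f,U}(x) = φ(x, τ_{f,U}(x))`. -/
def pMap (φ : State → ℝ → State) (U : Set State) (x : State) : State :=
  φ x (retTime φ U x)

/-- `y` is a globally asymptotically stable equilibrium for the flow `φ`. -/
def IsGASFlow (φ : State → ℝ → State) (y : State) : Prop :=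
  (∀ ε > 0, ∃ δ > 0, ∀ x : State, ‖x - y‖ < δ → ∀ t : ℝ, 0 ≤ t → ‖φ x t - y‖ < ε) ∧
  (∀ x : State, Tendsto (fun t => φ x t) atTop (𝓝 y))

/-- The two modes of a bi-modal hybrid automaton. -/
inductive Mode | one | two
deriving DecidableEq

/-- The other mode (target of the unique transition out of a mode). -/
def Mode.other : Mode → Mode
  | .one => .two
  | .two => .one

/-- A planar bi-modal hybrid automaton, with its two flows, and a unique
equilibrium `x*` of mode 1 lying in the interior of `Dom 1`. -/
structure BMHA where
  f1 : State → State
  f2 : State → State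
  g : State → ℝ
  φ1 : State → ℝ → State
  φ2 : State → ℝ → State
  lip1 : ∃ K, LipschitzWith K f1
  lip2 : ∃ K, LipschitzWith K f2
  g_smooth : ContDiff ℝ 1 g
  flow1 : IsFlow f1 φ1
  flow2 : IsFlow f2 φ2
  xstar : State
  equilibrium : f1 xstar = 0
  xstar_interior : g xstar < 0

/-- The vector field of each mode. -/
def BMHA.field (S : BMHA) : Mode → State → State
  | .one => S.f1
  | .two => S.f2

/-- The flow of each mode. -/
def BMHA.flow (S : BMHA) : Mode → State → ℝ → State
  | .one => S.φ1
  | .two => S.φ2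

/-- The domain of each mode: `Dom 1 = {g ≤ 0}`, `Dom 2 = {g ≥ 0}`. -/
def BMHA.Dom (S : BMHA) : Mode → Set State
  | .one => {x | S.g x ≤ 0}
  | .two => {x | 0 ≤ S.g x}

/-- The switching surface `G = {g = 0}`. -/
def BMHA.Gset (S : BMHA) : Set State := {x | S.g x = 0}

/-- The guard of the unique transition out of mode `q`:
`Guard (1→2) = {g ≥ 0}`, `Guard (2→1) = {g ≤ 0}`. -/
def BMHA.Guard (S : BMHA) : Mode → Set State
  | .one => {x | 0 ≤ S.g x}
  | .two => {x | S.g x ≤ 0}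

/-- A point of a hybrid trajectory: mode, time, state. -/
abbrev HPoint := Mode × ℝ × State

/-- The data of a (finite) hybrid trajectory of the transition-delayed automaton `S_H`:
times `t 0 < t 1 < ⋯ < t J`, modes `q j`, initial states `xs j` of each segment, and
delays `h j ∈ [0, H]`; on segment `j` the state follows the flow of mode `q j`, stays in
`Dom (q j)` until `t (j+1) - h j`, at which time it is in the guard of the transition
`(q j, q (j+1))`, and stays in that guard during the final `h j` time units, after which
the (identity-reset) transition to the alternate mode occurs. -/
structure TrajSpec (S : BMHA) (H : ℝ) where
  J : ℕ
  Jpos : 0 < J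
  t : ℕ → ℝ
  q : ℕ → Mode
  xs : ℕ → State
  h : ℕ → ℝ
  t_mono : ∀ j, j < J → t j < t (j + 1)
  h_nonneg : ∀ j, j + 1 < J → 0 ≤ h j
  h_le : ∀ j, j + 1 < J → h j ≤ H
  h_bound : ∀ j, j + 1 < J → t j ≤ t (j + 1) - h j
  alternate : ∀ j, j + 1 < J → q (j + 1) = (q j).other
  inDom : ∀ j, j + 1 < J → ∀ u ∈ Set.Icc (t j) (t (j + 1) - h j),
    S.flow (q j) (xs j) (u - t j) ∈ S.Dom (q j)
  inGuard : ∀ j, j + 1 < J → ∀ u ∈ Set.Icc (t (j + 1) - h j) (t (j + 1)),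
    S.flow (q j) (xs j) (u - t j) ∈ S.Guard (q j)
  reset : ∀ j, j + 1 < J → xs (j + 1) = S.flow (q j) (xs j) (t (j + 1) - t j)
  lastDom : ∀ u ∈ Set.Icc (t (J - 1)) (t J),
    S.flow (q (J - 1)) (xs (J - 1)) (u - t (J - 1)) ∈ S.Dom (q (J - 1))

/-- The hybrid trajectory (a subset of `Q × ℝ × ℝ²`) described by trajectory data. -/
def TrajSpec.toSet {S : BMHA} {H : ℝ} (D : TrajSpec S H) : Set HPoint :=
  {p | ∃ j < D.J, p.1 = D.q j ∧ p.2.1 ∈ Set.Icc (D.t j) (D.t (j + 1)) ∧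
    p.2.2 = S.flow (D.q j) (D.xs j) (p.2.1 - D.t j)}

/-- `T` is a hybrid trajectory of the transition-delayed automaton `S_H`. -/
def IsDelayedTraj (S : BMHA) (H : ℝ) (T : Set HPoint) : Prop :=
  ∃ D : TrajSpec S H, T = D.toSet

/-- The data of a complete (indefinitely extended) hybrid trajectory of `S_H`;
either infinitely many transitions (`J = ⊤`, with divergent transition times), or
finitely many, followed by a final segment defined for all subsequent times. -/
structure CTrajSpec (S : BMHA) (H : ℝ) where
  J : ℕ∞
  Jpos : 1 ≤ J
  t : ℕ → ℝ
  q : ℕ → Mode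
  xs : ℕ → State
  h : ℕ → ℝ
  t_mono : ∀ j : ℕ, ((j : ℕ∞) + 1) < J → t j < t (j + 1)
  h_nonneg : ∀ j : ℕ, ((j : ℕ∞) + 1) < J → 0 ≤ h j
  h_le : ∀ j : ℕ, ((j : ℕ∞) + 1) < J → h j ≤ H
  h_bound : ∀ j : ℕ, ((j : ℕ∞) + 1) < J → t j ≤ t (j + 1) - h j
  alternate : ∀ j : ℕ, ((j : ℕ∞) + 1) < J → q (j + 1) = (q j).other
  inDom : ∀ j : ℕ, ((j : ℕ∞) + 1) < J → ∀ u ∈ Set.Icc (t j) (t (j + 1) - h j),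
    S.flow (q j) (xs j) (u - t j) ∈ S.Dom (q j)
  inGuard : ∀ j : ℕ, ((j : ℕ∞) + 1) < J → ∀ u ∈ Set.Icc (t (j + 1) - h j) (t (j + 1)),
    S.flow (q j) (xs j) (u - t j) ∈ S.Guard (q j)
  reset : ∀ j : ℕ, ((j : ℕ∞) + 1) < J → xs (j + 1) = S.flow (q j) (xs j) (t (j + 1) - t j)
  nonZeno : J = ⊤ → Tendsto t atTop atTop
  lastDom : ∀ n : ℕ, J = (n : ℕ∞) + 1 → ∀ u : ℝ, t n ≤ u →
    S.flow (q n) (xs n) (u - t n) ∈ S.Dom (q n)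

/-- The set of (mode, time, state) points of a complete trajectory. -/
def CTrajSpec.toSet {S : BMHA} {H : ℝ} (D : CTrajSpec S H) : Set HPoint :=
  {p | ∃ j : ℕ, ((j : ℕ∞) + 1) ≤ D.J ∧ p.1 = D.q j ∧ D.t j ≤ p.2.1 ∧
    (((j : ℕ∞) + 1) < D.J → p.2.1 ≤ D.t (j + 1)) ∧
    p.2.2 = S.flow (D.q j) (D.xs j) (p.2.1 - D.t j)}

/-- The state along the complete trajectory converges to `y` as time tends to infinity. -/
def CTrajSpec.convergesTo {S : BMHA} {H : ℝ} (D : CTrajSpec S H) (y : State) : Prop :=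
  ∀ ε > 0, ∃ τ : ℝ, ∀ p ∈ D.toSet, τ ≤ p.2.1 → ‖p.2.2 - y‖ < ε

/-- `x*` is a globally asymptotically stable equilibrium of `S_H`: trajectories starting
near `x*` stay near `x*`, and every complete trajectory converges to `x*`. -/
def IsGAS (S : BMHA) (H : ℝ) : Prop :=
  (∀ ε > 0, ∃ δ > 0,
    (∀ D : TrajSpec S H, ‖D.xs 0 - S.xstar‖ < δ →
      ∀ p ∈ D.toSet, ‖p.2.2 - S.xstar‖ < ε) ∧
    (∀ D : CTrajSpec S H, ‖D.xs 0 - S.xstar‖ < δ →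
      ∀ p ∈ D.toSet, ‖p.2.2 - S.xstar‖ < ε)) ∧
  (∀ D : CTrajSpec S H, D.convergesTo S.xstar)

/-- A hybrid trajectory `T` is a closed orbit: there are `(q₀,t₀,x₀), (q̃,t̃,x̃), (q̄,t̄,x̄) ∈ T`
with `q̄ = q₀`, `t₀ < t̃ < t̄`, `x̃ ≠ x̄` and `x̄ = x₀`. -/
def IsClosedOrbit (T : Set HPoint) : Prop :=
  ∃ p0 pm pe : HPoint, p0 ∈ T ∧ pm ∈ T ∧ pe ∈ T ∧
    pe.1 = p0.1 ∧ p0.2.1 < pm.2.1 ∧ pm.2.1 < pe.2.1 ∧ pm.2.2 ≠ pe.2.2 ∧ pe.2.2 = p0.2.2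

/-- The transition-delayed automaton `S_H` admits a closed orbit. -/
def AdmitsClosedOrbit (S : BMHA) (H : ℝ) : Prop :=
  ∃ T : Set HPoint, IsDelayedTraj S H T ∧ IsClosedOrbit T

/-- `π(T)`: the set of states visited by the trajectory `T`. -/
def projT (T : Set HPoint) : Set State := {x | ∃ q t, (q, t, x) ∈ T}

/-- `T|_{[a,b]}`: restriction of the trajectory to a time interval. -/
def restr (T : Set HPoint) (a b : ℝ) : Set HPoint := {p ∈ T | a ≤ p.2.1 ∧ p.2.1 ≤ b}

/-- `T|_{[a,∞)}`: restriction of the trajectory to all times `≥ a`. -/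
def restrFrom (T : Set HPoint) (a : ℝ) : Set HPoint := {p ∈ T | a ≤ p.2.1}

/-- `τ_T(U, t₀) = inf {t | (q,t,x) ∈ T, t > t₀, x ∈ U}`. -/
def tauT (T : Set HPoint) (U : Set State) (t0 : ℝ) : ℝ :=
  sInf {t : ℝ | ∃ p ∈ T, p.2.1 = t ∧ t0 < t ∧ p.2.2 ∈ U}

/-- `P_T(U, t₀) = {(q,t,x) ∈ T | t = τ_T(U, t₀)}`: the first intersection of `T`
with `U` after time `t₀`. -/
def PT (T : Set HPoint) (U : Set State) (t0 : ℝ) : Set HPoint :=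
  {p ∈ T | p.2.1 = tauT T U t0}

/-- `[x,y]_X`: the union of all paths in `X` from `x` to `y`. -/
def pathsBetween (X : Set State) (x y : State) : Set State :=
  {z | ∃ γ : Path x y, (∀ u, γ u ∈ X) ∧ ∃ u, γ u = z}

/-- `U` is a path component of `X`. -/
def IsPathComponentOf (U X : Set State) : Prop :=
  ∃ x ∈ X, U = pathComponentIn X x

/-- The Poincaré curve `S_p = {x | s x = 0, ∇s(x)·f₁(x) > 0}` determined by `s`. -/
def PCurve (f1 : State → State) (s : State → ℝ) : Set State :=
  {x | s x = 0 ∧ 0 < ⟪gradient s x, f1 x⟫}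

/-- `s` defines a Poincaré curve for the field `f1`: `s` is continuously differentiable and
the curve is disjoint from the switching surface `{g = 0}`. -/
def IsPCurveFor (f1 : State → State) (g s : State → ℝ) : Prop :=
  ContDiff ℝ 1 s ∧ PCurve f1 s ∩ {x | g x = 0} = ∅

/-- Assumption 1: `S_p` has a single path component, `cl(S_p) = S_p ∪ {x*}`, and the
Euclidean norm restricted to `S_p` is injective. -/
def Assumption1 (f1 : State → State) (s : State → ℝ) (xstar : State) : Prop :=
  IsPathConnected (PCurve f1 s) ∧
  closure (PCurve f1 s) = PCurve f1 s ∪ {xstar} ∧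
  Set.InjOn (fun x : State => ‖x‖) (PCurve f1 s)

/-- `G̃ = {x ∈ G | ∇g(x)·f₂(x) < 0}`. -/
def BMHA.Gtilde (S : BMHA) : Set State :=
  {x | S.g x = 0 ∧ ⟪gradient S.g x, S.f2 x⟫ < 0}

/-- `T₂ = inf_{x ∈ G̃} τ_{f₂,S_p}(x)` (an extended real). -/
def T2 (S : BMHA) (s : State → ℝ) : EReal :=
  ⨅ x ∈ S.Gtilde, retTimeE S.φ2 (PCurve S.f1 s) x

/-- `D = {φ_{f₂}(x,h) | x ∈ G̃, 0 ≤ h < T₂}`. -/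
def Dset (S : BMHA) (s : State → ℝ) : Set State :=
  {y | ∃ x ∈ S.Gtilde, ∃ hd : ℝ, 0 ≤ hd ∧ (hd : EReal) < T2 S s ∧ y = S.φ2 x hd}

/-- Assumption 2: for every `x ∈ D`, `τ_{f₁,S_p}(x)` is finite and smaller
than `τ_{f₁,G}(x)`. -/
def Assumption2 (S : BMHA) (s : State → ℝ) : Prop :=
  ∀ x ∈ Dset S s, hits S.φ1 (PCurve S.f1 s) x ∧
    ((retTime S.φ1 (PCurve S.f1 s) x : EReal) < retTimeE S.φ1 S.Gset x)

/-- Assumption 3: for every `x` in the interior of `Dom 2`, the point `y = P_{f₂,G}(x)`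
is defined and satisfies `∇g(y)·f₂(y) ≠ 0`. -/
def Assumption3 (S : BMHA) : Prop :=
  ∀ x ∈ interior {y : State | 0 ≤ S.g y}, hits S.φ2 S.Gset x ∧
    ⟪gradient S.g (pMap S.φ2 S.Gset x), S.f2 (pMap S.φ2 S.Gset x)⟫ ≠ 0

/-- `S̃_p = {x ∈ S_p | τ_{f₁,G}(x) finite, ∇g(P_{f₁,G}(x))·f₁(P_{f₁,G}(x)) > 0}`. -/
def SpTilde (S : BMHA) (s : State → ℝ) : Set State :=
  {x ∈ PCurve S.f1 s | hits S.φ1 S.Gset x ∧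
    0 < ⟪gradient S.g (pMap S.φ1 S.Gset x), S.f1 (pMap S.φ1 S.Gset x)⟫}

/-- Assumption 4: for every `x ∈ S̃_p`, the point `y = P_{f₁,G}(x)` satisfies
`∇g(y)·f₁(y) ≠ 0`. -/
def Assumption4 (S : BMHA) (s : State → ℝ) : Prop :=
  ∀ x ∈ SpTilde S s,
    ⟪gradient S.g (pMap S.φ1 S.Gset x), S.f1 (pMap S.φ1 S.Gset x)⟫ ≠ 0

/-- The delayed Poincaré map `H^{h₁,h₂}(x₀) = P_{f₁,S_p}(x₄)` where
`x₁ = P_{f₁,G}(x₀)`, `x₂ = φ_{f₁}(x₁,h₁)`, `x₃ = P_{f₂,G}(x₂)`, `x₄ = φ_{f₂}(x₃,h₂)`. -/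
def dpm (S : BMHA) (s : State → ℝ) (h1 h2 : ℝ) (x0 : State) : State :=
  pMap S.φ1 (PCurve S.f1 s)
    (S.φ2 (pMap S.φ2 S.Gset (S.φ1 (pMap S.φ1 S.Gset x0) h1)) h2)

/-- The maximum stable delay `σ(S) = sup {H ≥ 0 | x* is a GAS equilibrium of S_H}`. -/
def sigmaMSD (S : BMHA) : EReal :=
  sSup (Real.toEReal '' {H : ℝ | 0 ≤ H ∧ IsGAS S H})

/-- `σ̂(S) = inf {H ≥ 0 | S_H admits a closed orbit}`. -/
def sigmaHat (S : BMHA) : EReal :=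
  sInf (Real.toEReal '' {H : ℝ | 0 ≤ H ∧ AdmitsClosedOrbit S H})

/-!
The flow of a locally Lipschitz field is jointly continuous in the initial point and time. Let `x₀`
start off `G = {g = 0}` and first reach it at time `τ`, transversally. Then `t ↦ g (φ x₀ t)` has no
zero on `[0, τ - h]` and takes values of opposite signs at `τ ± h`, for all small `h > 0`. Both
properties persist for initial points near `x₀` (the first by compactness of `[0, τ - h]`), so by
the intermediate value theorem their return times lie in `[τ - h, τ + h]`. Thus the return time is
continuous at `x₀`, and so is `P = φ (·, τ (·))`.
-/

open Set Function Metric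

theorem forall_lt_of_forall_Ico_lt {u : ℝ → ℝ} {a b ε : ℝ} (hu : ContinuousOn u (Icc a b))
    (h : ∀ t ∈ Icc a b, (∀ s ∈ Ico a t, u s < ε) → u t < ε) :
    ∀ t ∈ Icc a b, u t < ε := by
  by_contra! hbad
  set S := Icc a b ∩ u ⁻¹' Ici ε
  have hS : S.Nonempty := hbad
  have hbdd : BddBelow S := ⟨a, fun t ht => ht.1.1⟩
  have hfirst : sInf S ∈ S :=
    (hu.preimage_isClosed_of_isClosed isClosed_Icc isClosed_Ici).csInf_mem hS hbdd
  refine not_lt_of_ge hfirst.2 (h _ hfirst.1 fun s hs => ?_)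
  by_contra! hs'
  exact not_le_of_gt hs.2 (csInf_le hbdd ⟨⟨hs.1, hs.2.le.trans hfirst.1.2⟩, hs'⟩)

theorem exists_mem_Icc_eq_zero_of_mul_neg {ψ : ℝ → ℝ} {a b : ℝ} (hab : a ≤ b)
    (hψ : ContinuousOn ψ (Icc a b)) (hsign : ψ a * ψ b < 0) : ∃ t ∈ Icc a b, ψ t = 0 := by
  rw [← uIcc_of_le hab] at hψ ⊢
  refine intermediate_value_uIcc hψ ?_
  rcases mul_neg_iff.1 hsign with ⟨ha, hb⟩ | ⟨ha, hb⟩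
  · exact mem_uIcc.2 (Or.inr ⟨hb.le, ha.le⟩)
  · exact mem_uIcc.2 (Or.inl ⟨ha.le, hb.le⟩)

theorem HasDerivAt.eventually_sub_mul_add_neg {ψ : ℝ → ℝ} {c τ : ℝ} (hψ : HasDerivAt ψ c τ)
    (hτ : ψ τ = 0) (hc : c ≠ 0) : ∀ᶠ h in 𝓝[>] 0, ψ (τ - h) * ψ (τ + h) < 0 := by
  have hleft : Tendsto (fun h => (-h)⁻¹ * ψ (τ + -h)) (𝓝[>] 0) (𝓝 c) := by
    have := hψ.tendsto_slope_zero_left.comp (neg_zero (G := ℝ) ▸ tendsto_neg_nhdsGT (a := (0 : ℝ)))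
    simpa [Function.comp_def, hτ] using this
  have hright : Tendsto (fun h => h⁻¹ * ψ (τ + h)) (𝓝[>] 0) (𝓝 c) := by
    simpa [hτ] using hψ.tendsto_slope_zero_right
  filter_upwards [(hleft.mul hright).eventually (lt_mem_nhds (mul_self_pos.2 hc)),
    self_mem_nhdsWithin] with h hprod (hh : 0 < h)
  have hprod' : 0 < -(h⁻¹ * h⁻¹) * (ψ (τ - h) * ψ (τ + h)) := by
    rw [← sub_eq_add_neg] at hprod
    linarith [show (-h)⁻¹ * ψ (τ - h) * (h⁻¹ * ψ (τ + h))
      = -(h⁻¹ * h⁻¹) * (ψ (τ - h) * ψ (τ + h)) by rw [inv_neg]; ring]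
  exact neg_of_mul_pos_right hprod' (neg_nonpos.2 (mul_self_nonneg _))

section HitTimes

variable {φ : State → ℝ → State} {U : Set State} {x : State}

theorem retTime_le {t : ℝ} (ht : t ∈ hitTimes φ U x) : retTime φ U x ≤ t :=
  csInf_le ⟨0, fun _ hs => hs.1.le⟩ ht

theorem le_retTime {s : ℝ} (hhits : hits φ U x) (hmiss : ∀ t ∈ Ioo 0 s, φ x t ∉ U) :
    s ≤ retTime φ U x :=
  le_csInf hhits fun t ht => not_lt.1 fun hts => hmiss t ⟨ht.1, hts⟩ ht.2

theorem notMem_of_lt_retTime {t : ℝ} (ht₀ : 0 < t) (ht : t < retTime φ U x) : φ x t ∉ U :=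
  fun htU => not_le_of_gt ht (retTime_le ⟨ht₀, htU⟩)

theorem retTime_mem_hitTimes (hU : IsClosed U) (hφx : Continuous (φ x)) (h₀ : φ x 0 ∉ U)
    (hhits : hits φ U x) : retTime φ U x ∈ hitTimes φ U x := by
  have hclosed : IsClosed (Ici 0 ∩ φ x ⁻¹' U) := isClosed_Ici.inter (hU.preimage hφx)
  have hsub : hitTimes φ U x ⊆ Ici 0 ∩ φ x ⁻¹' U := fun t ht => ⟨ht.1.le, ht.2⟩
  obtain ⟨hnonneg, hmem⟩ : retTime φ U x ∈ Ici 0 ∩ φ x ⁻¹' U :=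
    closure_minimal hsub hclosed (csInf_mem_closure hhits ⟨0, fun _ hs => hs.1.le⟩)
  exact ⟨hnonneg.lt_of_ne fun h => h₀ (h ▸ hmem), hmem⟩

theorem retTime_mem_Icc {a b t : ℝ} (ha : 0 < a) (ht : t ∈ Icc a b) (htU : φ x t ∈ U)
    (hmiss : ∀ s ∈ Ioo 0 a, φ x s ∉ U) : retTime φ U x ∈ Icc a b :=
  have hhit : t ∈ hitTimes φ U x := ⟨ha.trans_le ht.1, htU⟩
  ⟨le_retTime (⟨t, hhit⟩ : (hitTimes φ U x).Nonempty) hmiss, (retTime_le hhit).trans ht.2⟩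

end HitTimes

namespace IsFlow

variable {f : State → State} {φ : State → ℝ → State}

theorem continuous (hφ : IsFlow f φ) (x : State) : Continuous (φ x) :=
  continuous_iff_continuousAt.2 fun t => (hφ.2 x t).continuousAt

theorem reverse (hφ : IsFlow f φ) : IsFlow (-f) fun x t => φ x (-t) := by
  refine ⟨fun x => by simpa using hφ.1 x, fun x t => ?_⟩
  simpa [Function.comp_def] using (hφ.2 x (-t)).scomp t (hasDerivAt_neg t)

theorem hasDerivAt_comp {g : State → ℝ} (hφ : IsFlow f φ) {x : State} {t : ℝ}
    (hg : DifferentiableAt ℝ g (φ x t)) :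
    HasDerivAt (fun u => g (φ x u)) ⟪gradient g (φ x t), f (φ x t)⟫ t := by
  rw [inner_gradient_left]
  exact hg.hasFDerivAt.comp_hasDerivAt t (hφ.2 x t)

/-- Grönwall's inequality inside a compact tube around the orbit segment of `x₀`, on which `f` is
Lipschitz; the nearby orbit cannot leave the tube before time `T`, since it would first have to be
`ε`-far from the orbit of `x₀`. -/
theorem eventually_forall_Icc_dist_lt (hf : LocallyLipschitz f) (hφ : IsFlow f φ) (x₀ : State)
    (T : ℝ) {ε : ℝ} (hε : 0 < ε) :
    ∀ᶠ x in 𝓝 x₀, ∀ t ∈ Icc 0 T, dist (φ x t) (φ x₀ t) < ε := by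
  set tube := cthickening ε (φ x₀ '' Icc 0 T)
  obtain ⟨L, hL⟩ := (hf.locallyLipschitzOn (s := tube)).exists_lipschitzOnWith_of_compact
    ((isCompact_Icc.image (hφ.continuous x₀)).cthickening)
  have hnear : ∀ᶠ x in 𝓝 x₀, dist x x₀ * Real.exp (L * T) < ε :=
    ((continuous_id.dist continuous_const).mul continuous_const).continuousAt.eventually_lt
      continuousAt_const (by simpa using hε)
  filter_upwards [hnear] with x hx
  refine forall_lt_of_forall_Ico_lt
    ((hφ.continuous x).dist (hφ.continuous x₀)).continuousOn fun t ht hstay => ?_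
  have horbit : ∀ s ∈ Ico 0 t, φ x₀ s ∈ φ x₀ '' Icc 0 T :=
    fun s hs => mem_image_of_mem _ ⟨hs.1, hs.2.le.trans ht.2⟩
  have hgronwall := dist_le_of_trajectories_ODE_of_mem (v := fun _ => f) (s := fun _ => tube)
    (fun _ _ => hL) (hφ.continuous x).continuousOn (fun s _ => (hφ.2 x s).hasDerivWithinAt)
    (fun s hs => mem_cthickening_of_dist_le _ _ _ _ (horbit s hs) (hstay s hs).le)
    (hφ.continuous x₀).continuousOn (fun s _ => (hφ.2 x₀ s).hasDerivWithinAt)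
    (fun s hs => self_subset_cthickening _ (horbit s hs)) (by rw [hφ.1, hφ.1])
    t (right_mem_Icc.2 ht.1)
  calc dist (φ x t) (φ x₀ t) ≤ dist x x₀ * Real.exp (L * (t - 0)) := hgronwall
    _ ≤ dist x x₀ * Real.exp (L * T) := by gcongr; linarith [ht.2]
    _ < ε := hx

theorem continuous_uncurry (hf : LocallyLipschitz f) (hφ : IsFlow f φ) :
    Continuous (uncurry φ) := by
  refine continuous_iff_continuousAt.2 fun ⟨x₀, t₀⟩ => Metric.tendsto_nhds.2 fun ε hε => ?_
  set T := |t₀| + 1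
  have hforward := hφ.eventually_forall_Icc_dist_lt hf x₀ T (half_pos hε)
  have hbackward := hφ.reverse.eventually_forall_Icc_dist_lt hf.neg x₀ T (half_pos hε)
  have htime : ∀ᶠ t in 𝓝 t₀, dist (φ x₀ t) (φ x₀ t₀) < ε / 2 ∧ |t| < T :=
    (Metric.tendsto_nhds.1 ((hφ.continuous x₀).tendsto t₀) _ (half_pos hε)).and
      (continuous_abs.continuousAt.eventually_lt continuousAt_const (lt_add_one _))
  rw [nhds_prod_eq]
  filter_upwards [(hforward.and hbackward).prod_mk htime]
    with ⟨x, t⟩ ⟨⟨hfw, hbw⟩, hclose, hT⟩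
  have hnear : dist (φ x t) (φ x₀ t) < ε / 2 := by
    rcases le_total 0 t with ht | ht
    · exact hfw t ⟨ht, (le_abs_self t).trans hT.le⟩
    · simpa using hbw (-t) ⟨neg_nonneg.2 ht, (neg_le_abs t).trans hT.le⟩
  calc dist (φ x t) (φ x₀ t₀) ≤ dist (φ x t) (φ x₀ t) + dist (φ x₀ t) (φ x₀ t₀) :=
        dist_triangle _ _ _
    _ < ε := by linarith

end IsFlow

section ZeroSet

variable {φ : State → ℝ → State} {g : State → ℝ} {x₀ : State} {c : ℝ}

theorem tendsto_retTime_zeroSet (hφ : Continuous (uncurry φ)) (hg : Continuous g)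
    (h₀ : g (φ x₀ 0) ≠ 0) (hhits : hits φ {y | g y = 0} x₀)
    (hderiv : HasDerivAt (fun t => g (φ x₀ t)) c (retTime φ {y | g y = 0} x₀)) (hc : c ≠ 0) :
    Tendsto (retTime φ {y | g y = 0}) (𝓝 x₀) (𝓝 (retTime φ {y | g y = 0} x₀)) := by
  set τ := retTime φ {y | g y = 0} x₀
  have hψ : Continuous fun p : State × ℝ => g (φ p.1 p.2) := hg.comp hφ
  obtain ⟨hτpos, hτ⟩ :=
    retTime_mem_hitTimes (isClosed_eq hg continuous_const) (hφ.uncurry_left x₀) h₀ hhits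
  have hcross : ∀ h ∈ Ioo 0 τ, g (φ x₀ (τ - h)) * g (φ x₀ (τ + h)) < 0 →
      ∀ᶠ x in 𝓝 x₀, retTime φ {y | g y = 0} x ∈ Icc (τ - h) (τ + h) := by
    intro h hh hsign
    have hmiss : ∀ᶠ x in 𝓝 x₀, ∀ t ∈ Icc 0 (τ - h), g (φ x t) ≠ 0 := by
      refine isCompact_Icc.eventually_forall_of_forall_eventually fun t ht =>
        hψ.continuousAt.eventually_ne ?_
      rcases ht.1.eq_or_lt with rfl | ht₀
      · exact h₀
      · exact notMem_of_lt_retTime ht₀ (by linarith [ht.2, hh.1])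
    have hsign' : ∀ᶠ x in 𝓝 x₀, g (φ x (τ - h)) * g (φ x (τ + h)) < 0 :=
      ((hg.comp (hφ.uncurry_right _)).mul (hg.comp (hφ.uncurry_right _))).continuousAt
        |>.eventually_lt continuousAt_const hsign
    filter_upwards [hmiss, hsign'] with x hmissx hsignx
    obtain ⟨t, ht, hzero⟩ := exists_mem_Icc_eq_zero_of_mul_neg (by linarith [hh.1])
      (hg.comp (hφ.uncurry_left x)).continuousOn hsignx
    exact retTime_mem_Icc (sub_pos.2 hh.2) ht hzero fun s hs => hmissx s ⟨hs.1.le, hs.2.le⟩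
  refine Metric.tendsto_nhds.2 fun ε hε => ?_
  obtain ⟨h, hsign, hh⟩ := ((hderiv.eventually_sub_mul_add_neg hτ hc).and
    (Ioo_mem_nhdsGT (lt_min hτpos hε))).exists
  filter_upwards [hcross h ⟨hh.1, hh.2.trans_le (min_le_left _ _)⟩ hsign] with x hx
  rw [Real.dist_eq, abs_sub_lt_iff]
  constructor <;> linarith [hx.1, hx.2, hh.2.trans_le (min_le_right _ _)]

theorem continuousAt_pMap_zeroSet (hφ : Continuous (uncurry φ)) (hg : Continuous g)
    (h₀ : g (φ x₀ 0) ≠ 0) (hhits : hits φ {y | g y = 0} x₀)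
    (hderiv : HasDerivAt (fun t => g (φ x₀ t)) c (retTime φ {y | g y = 0} x₀)) (hc : c ≠ 0) :
    ContinuousAt (pMap φ {y | g y = 0}) x₀ :=
  hφ.continuousAt.tendsto.comp
    (tendsto_id.prodMk_nhds (tendsto_retTime_zeroSet hφ hg h₀ hhits hderiv hc))

end ZeroSet

theorem poincare_map_continuous_general (f : State → State) (φ : State → ℝ → State)
    (hf : ContDiff ℝ 1 f) (hφ : IsFlow f φ)
    (g : State → ℝ) (hg : ContDiff ℝ 1 g)
    (A : Set State) (hdisj : A ∩ {x | g x = 0} = ∅)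
    (hdef : ∀ x ∈ A, hits φ {y | g y = 0} x ∧
      ⟪gradient g (pMap φ {y | g y = 0} x), f (pMap φ {y | g y = 0} x)⟫ ≠ 0) :
    ContinuousOn (pMap φ {y | g y = 0}) A := by
  intro x hx
  obtain ⟨hhits, htrans⟩ := hdef x hx
  have h₀ : g (φ x 0) ≠ 0 := by
    rw [hφ.1]
    exact fun hgx => eq_empty_iff_forall_notMem.1 hdisj x ⟨hx, hgx⟩
  have hderiv := hφ.hasDerivAt_comp (x := x) (t := retTime φ {y | g y = 0} x)
    (hg.differentiable one_ne_zero _)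
  exact (continuousAt_pMap_zeroSet (hφ.continuous_uncurry hf.locallyLipschitz) hg.continuous h₀
    hhits hderiv htrans).continuousWithinAt

/-- Lemma 6: continuity of the Poincaré map onto the switching surface
on an open set where it is defined and the crossing is transversal. -/
theorem poincare_map_continuous (f : State → State) (φ : State → ℝ → State)
    (hf : ContDiff ℝ 1 f) (hφ : IsFlow f φ)
    (g : State → ℝ) (hg : ContDiff ℝ 1 g)
    (A : Set State) (hA : IsOpen A) (hdisj : A ∩ {x | g x = 0} = ∅)
    (hdef : ∀ x ∈ A, hits φ {y | g y = 0} x ∧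
      ⟪gradient g (pMap φ {y | g y = 0} x), f (pMap φ {y | g y = 0} x)⟫ ≠ 0) :
    ContinuousOn (pMap φ {y | g y = 0}) A :=
  poincare_map_continuous_general f φ hf hφ g hg A hdisj hdef
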